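/- arXiv:1101.2645 — 3 statements merged into one kernel-verified Lean document; each statement's English description precedes it below -/
import Mathlib

section
/- For the weights w_t(k) = sqrt((k+1)t/(1+(k+1)t)) on ℕ with t ∈ (0,1), the quantity sup over t ∈ (0,1) of |1 - w_t(k-1)/w_t(k)| is at most 1/(k+1+sqrt(k^2+k)) for every k ≥ 1; in particular it tends to 0 as k → ∞. -/
/-!
Write `w s t = √(s t / (1 + s t))`. For `t > 0` the ratio of the radicands,
`k (1 + (k+1) t) / ((k+1) (1 + k t))`, lies between `k / (k+1)` and `1`, so
`0 ≤ 1 - w k t / w (k+1) t ≤ 1 - √(k / (k+1))`, and rationalising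
`1 - √(k (k+1)) / (k+1)` gives `1 / (k + 1 + √(k² + k))`.
-/

open Filter Topology

noncomputable section

namespace QuantumDisk

def weight (s t : ℝ) : ℝ := √(s * t / (1 + s * t))

variable {x t : ℝ}

lemma weight_sq_le_weight_succ_sq (hx : 0 ≤ x) (ht : 0 ≤ t) :
    x * t / (1 + x * t) ≤ (x + 1) * t / (1 + (x + 1) * t) := by
  rw [div_le_div_iff₀ (by positivity) (by positivity)]
  nlinarith

lemma div_succ_mul_weight_succ_sq_le (hx : 0 ≤ x) (ht : 0 ≤ t) :
    x / (x + 1) * ((x + 1) * t / (1 + (x + 1) * t)) ≤ x * t / (1 + x * t) := by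
  rw [div_mul_div_comm, div_le_div_iff₀ (by positivity) (by positivity)]
  have : 0 ≤ x * (x + 1) * (t * t) := by positivity
  nlinarith

lemma weight_div_weight_succ_le_one (hx : 0 ≤ x) (ht : 0 < t) :
    weight x t / weight (x + 1) t ≤ 1 := by
  have hpos : 0 < weight (x + 1) t := Real.sqrt_pos.2 (by positivity)
  rw [div_le_one hpos]
  exact Real.sqrt_le_sqrt (weight_sq_le_weight_succ_sq hx ht.le)

lemma sqrt_div_succ_le_weight_div_weight_succ (hx : 0 ≤ x) (ht : 0 < t) :
    √(x / (x + 1)) ≤ weight x t / weight (x + 1) t := by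
  have hb : 0 < (x + 1) * t / (1 + (x + 1) * t) := by positivity
  rw [weight, weight, ← Real.sqrt_div' _ hb.le]
  exact Real.sqrt_le_sqrt ((le_div_iff₀ hb).2 (div_succ_mul_weight_succ_sq_le hx ht.le))

lemma one_sub_sqrt_div_succ (hx : 0 ≤ x) :
    1 - √(x / (x + 1)) = 1 / (x + 1 + √(x ^ 2 + x)) := by
  have hs : √(x ^ 2 + x) ^ 2 = x ^ 2 + x := Real.sq_sqrt (by positivity)
  have hsqrt : √(x / (x + 1)) = √(x ^ 2 + x) / (x + 1) := by
    rw [show x / (x + 1) = (x ^ 2 + x) / (x + 1) ^ 2 by field_simp,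
      Real.sqrt_div' _ (by positivity), Real.sqrt_sq (by positivity)]
  have hx1 : x + 1 ≠ 0 := by positivity
  rw [hsqrt, eq_div_iff (by positivity), one_sub_div hx1, div_mul_eq_mul_div,
    div_eq_one_iff_eq hx1]
  nlinarith

lemma abs_one_sub_weight_div_weight_succ_le (hx : 0 ≤ x) (ht : 0 < t) :
    |1 - weight x t / weight (x + 1) t| ≤ 1 / (x + 1 + √(x ^ 2 + x)) := by
  rw [abs_of_nonneg (sub_nonneg.2 (weight_div_weight_succ_le_one hx ht)),
    ← one_sub_sqrt_div_succ hx]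
  linarith [sqrt_div_succ_le_weight_div_weight_succ hx ht]

lemma tendsto_one_div_add_sqrt_atTop :
    Tendsto (fun x : ℝ => 1 / (x + 1 + √(x ^ 2 + x))) atTop (𝓝 0) := by
  have hle : ∀ x : ℝ, x + 1 ≤ x + 1 + √(x ^ 2 + x) := fun x => by
    linarith [Real.sqrt_nonneg (x ^ 2 + x)]
  have hgrow := tendsto_atTop_mono hle (tendsto_atTop_add_const_right _ 1 tendsto_id)
  simpa only [one_div, Pi.inv_def] using hgrow.inv_tendsto_atTop

end QuantumDisk

end

open QuantumDisk in
theorem quantum_disk_h3_bound :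
    (∀ k : ℕ, 1 ≤ k →
      sSup ((fun t : ℝ =>
          |1 - Real.sqrt (k * t / (1 + k * t)) / Real.sqrt ((k + 1) * t / (1 + (k + 1) * t))|) ''
        Set.Ioo (0 : ℝ) 1) ≤ 1 / (k + 1 + Real.sqrt (k ^ 2 + k))) ∧
      Filter.Tendsto (fun k : ℕ => 1 / (k + 1 + Real.sqrt (k ^ 2 + k)))
        Filter.atTop (nhds 0) := by
  refine ⟨fun k _ => Real.sSup_le ?_ (by positivity), ?_⟩
  · rintro _ ⟨t, ⟨ht, -⟩, rfl⟩
    exact abs_one_sub_weight_div_weight_succ_le k.cast_nonneg ht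
  · exact tendsto_one_div_add_sqrt_atTop.comp tendsto_natCast_atTop_atTop
end

section
/- Let w : ℤ → ℝ be positive and strictly increasing with values in [w₋, w₊] where 0 < w₋ < w₊, and let S(k) = w(k)^2 - w(k-1)^2. Then for every integer i, ∑_{k ≤ i} S(k)/w(k) ≤ 2(w(i) − w₋) ≤ 2(w₊ − w₋). -/
/-! The summand satisfies `(b² - a²) / b ≤ 2 (b - a)`, which is `(b - a)² ≥ 0` (the discrete form of
`∫_{a²}^{b²} x^{-1/2} dx = 2 (b - a)`). Since the increments `w k - w (k - 1)` are nonnegative, every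
finite partial sum is bounded by a telescoping sum `2 (w i - w (j - 1)) ≤ 2 (w i - w₋)`. -/

open Finset

lemma sq_sub_sq_div_le_two_mul_sub {a b : ℝ} (hb : 0 < b) : (b ^ 2 - a ^ 2) / b ≤ 2 * (b - a) := by
  rw [div_le_iff₀ hb]
  nlinarith [sq_nonneg (b - a)]

lemma Monotone.sum_sub_pred_le {α : Type*} [AddCommGroup α] [LinearOrder α] [IsOrderedAddMonoid α]
    {f : ℤ → α} (hf : Monotone f) {m : α} (hm : ∀ k, m ≤ f k)
    (s : Finset ℤ) {i : ℤ} (hs : ∀ k ∈ s, k ≤ i) : ∑ k ∈ s, (f k - f (k - 1)) ≤ f i - m := by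
  induction s using Finset.induction_on_max generalizing i with
  | empty => simpa using hm i
  | insert a s hlt ih =>
    have hrest : ∑ k ∈ s, (f k - f (k - 1)) ≤ f (a - 1) - m :=
      ih fun k hk => Int.le_sub_one_of_lt (hlt k hk)
    have hai : f a ≤ f i := hf (hs a (mem_insert_self a s))
    calc ∑ k ∈ insert a s, (f k - f (k - 1))
        = f a - f (a - 1) + ∑ k ∈ s, (f k - f (k - 1)) := sum_insert fun has => (hlt a has).false
      _ ≤ f a - f (a - 1) + (f (a - 1) - m) := by gcongr
      _ ≤ f i - m := by rw [sub_add_sub_cancel]; exact sub_le_sub_right hai m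

theorem integral_estimate_below_general (w : ℤ → ℝ) (wm wp : ℝ)
    (hpos : ∀ k, 0 < w k) (hmono : StrictMono w)
    (hrange : ∀ k, w k ∈ Set.Icc wm wp) (i : ℤ) :
    (∑' k : {k : ℤ // k ≤ i}, (w k ^ 2 - w ((k : ℤ) - 1) ^ 2) / w k) ≤ 2 * (w i - wm) ∧
      2 * (w i - wm) ≤ 2 * (wp - wm) := by
  have hwm : ∀ k, wm ≤ w k := fun k => (hrange k).1
  refine ⟨tsum_le_of_sum_le' (by linarith [hwm i]) fun s => ?_, by linarith [(hrange i).2]⟩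
  calc ∑ k ∈ s, (w k ^ 2 - w ((k : ℤ) - 1) ^ 2) / w k
      ≤ ∑ k ∈ s, 2 * (w k - w ((k : ℤ) - 1)) :=
        sum_le_sum fun k _ => sq_sub_sq_div_le_two_mul_sub (hpos k)
    _ = 2 * ∑ k ∈ s.map (Function.Embedding.subtype _), (w k - w (k - 1)) := by
        rw [mul_sum, sum_map]; rfl
    _ ≤ 2 * (w i - wm) := by
        gcongr
        refine hmono.monotone.sum_sub_pred_le hwm _ fun k hk => ?_
        obtain ⟨k, -, rfl⟩ := mem_map.mp hk
        exact k.2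

theorem integral_estimate_below (w : ℤ → ℝ) (wm wp : ℝ) (hm : 0 < wm) (h : wm < wp)
    (hpos : ∀ k, 0 < w k) (hmono : StrictMono w)
    (hrange : ∀ k, w k ∈ Set.Icc wm wp) (i : ℤ) :
    (∑' k : {k : ℤ // k ≤ i}, (w k ^ 2 - w ((k : ℤ) - 1) ^ 2) / w k) ≤ 2 * (w i - wm) ∧
      2 * (w i - wm) ≤ 2 * (wp - wm) :=
  integral_estimate_below_general w wm wp hpos hmono hrange i
end

section
/- Let w : ℤ → ℝ be positive and increasing and let h₃(k) ≥ 0 satisfy 1 − w(k−1)/w(k) ≤ h₃(k) for all k. Then for all k and n ≥ 1, |1 − w(k)^{n−1}/(w(k+1)·w(k+2)⋯w(k+n−1))| ≤ ∑_{j=0}^{n−1} j·h₃(k+n−j). -/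
/-!
Each ratio `w k / w (k + 1 + j)` telescopes into `j + 1` one-step ratios in `[0, 1]`, so
`1 - ∏ xᵢ ≤ ∑ (1 - xᵢ)` for `xᵢ ∈ [0, 1]` bounds its defect by `∑_{i ≤ j} h₃ (k + 1 + i)`.
The same inequality for the product of these ratios over `j < n - 1`, followed by a summation
by parts in which `h₃ (k + 1 + i)` is counted `n - 1 - i` times, gives the claim.
-/

open Finset

theorem one_sub_prod_le_sum_one_sub {ι R : Type*} [CommRing R] [LinearOrder R]
    [IsStrictOrderedRing R] (s : Finset ι) (f : ι → R) (h0 : ∀ i ∈ s, 0 ≤ f i)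
    (h1 : ∀ i ∈ s, f i ≤ 1) :
    1 - ∏ i ∈ s, f i ≤ ∑ i ∈ s, (1 - f i) := by
  induction s using Finset.cons_induction with
  | empty => simp
  | cons a s ha ih =>
    rw [prod_cons, sum_cons]
    have hfa : f a ≤ 1 := h1 a (mem_cons_self a s)
    have hprod : ∏ i ∈ s, f i ≤ 1 :=
      prod_le_one (fun i hi ↦ h0 i (mem_cons_of_mem hi)) fun i hi ↦ h1 i (mem_cons_of_mem hi)
    have ih := ih (fun i hi ↦ h0 i (mem_cons_of_mem hi)) fun i hi ↦ h1 i (mem_cons_of_mem hi)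
    -- `1 - x y = (1 - x) + (1 - y) - (1 - x) (1 - y)`
    nlinarith [mul_nonneg (sub_nonneg.2 hfa) (sub_nonneg.2 hprod)]

theorem prod_range_div_succ_of_ne_zero {K : Type*} [Field K] (f : ℕ → K) (hf : ∀ i, f i ≠ 0)
    (n : ℕ) : ∏ i ∈ range n, f i / f (i + 1) = f 0 / f n := by
  induction n with
  | zero => simp [div_self (hf 0)]
  | succ n ih => rw [prod_range_succ, ih, div_mul_div_cancel₀ (hf n)]

theorem sum_range_sum_range_succ_eq_sum_mul_sub {R : Type*} [Semiring R] (f : ℕ → R) (m : ℕ) :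
    ∑ j ∈ range m, ∑ i ∈ range (j + 1), f i =
      ∑ j ∈ range (m + 1), (j : R) * f (m - j) := by
  induction m with
  | zero => simp
  | succ m ih =>
    rw [sum_range_succ, ih, sum_range_succ' _ (m + 1), ← sum_range_reflect f (m + 1)]
    simp only [Nat.cast_add, Nat.cast_one, add_mul, one_mul, sum_add_distrib, Nat.cast_zero,
      zero_mul, add_zero, Nat.add_sub_add_right, Nat.add_sub_cancel]

section Weight

variable {w : ℤ → ℝ} (hpos : ∀ k, 0 < w k) (hmono : Monotone w)
include hpos hmono

theorem div_mem_Icc_of_le {a b : ℤ} (hab : a ≤ b) : w a / w b ∈ Set.Icc 0 1 :=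
  ⟨div_nonneg (hpos a).le (hpos b).le, div_le_one_of_le₀ (hmono hab) (hpos b).le⟩

theorem one_sub_div_le_sum_one_sub_div (a : ℤ) (m : ℕ) :
    1 - w a / w (a + m) ≤ ∑ i ∈ range m, (1 - w (a + i) / w (a + i + 1)) := by
  have htelescope :=
    prod_range_div_succ_of_ne_zero (fun i : ℕ ↦ w (a + i)) (fun i ↦ (hpos _).ne') m
  push_cast at htelescope
  simp only [add_zero, ← add_assoc] at htelescope
  rw [← htelescope]
  exact one_sub_prod_le_sum_one_sub _ _
    (fun i _ ↦ (div_mem_Icc_of_le hpos hmono (by omega)).1)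
    fun i _ ↦ (div_mem_Icc_of_le hpos hmono (by omega)).2

theorem one_sub_div_le_sum_of_one_sub_div_le {h : ℤ → ℝ}
    (hstep : ∀ k, 1 - w (k - 1) / w k ≤ h k) (a : ℤ) (m : ℕ) :
    1 - w a / w (a + m) ≤ ∑ i ∈ range m, h (a + 1 + i) :=
  (one_sub_div_le_sum_one_sub_div hpos hmono a m).trans <| sum_le_sum fun i _ ↦ by
    simpa [add_right_comm a 1] using hstep (a + i + 1)

end Weight

theorem weight_ratio_product_bound_general (w : ℤ → ℝ) (hpos : ∀ k, 0 < w k) (hmono : Monotone w)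
    (h₃ : ℤ → ℝ)
    (hstep : ∀ k, 1 - w (k - 1) / w k ≤ h₃ k) :
    ∀ (k : ℤ) (n : ℕ), 1 ≤ n →
      |1 - w k ^ (n - 1) / ∏ j ∈ Finset.range (n - 1), w (k + 1 + j)| ≤
        ∑ j ∈ Finset.range n, (j : ℝ) * h₃ (k + n - j) := by
  intro k n hn
  obtain ⟨m, rfl⟩ := Nat.exists_eq_add_of_le' hn
  have hratio (j : ℕ) : w k / w (k + 1 + j) ∈ Set.Icc 0 1 :=
    div_mem_Icc_of_le hpos hmono (by omega)
  have hprod :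
      w k ^ m / ∏ j ∈ range m, w (k + 1 + j) = ∏ j ∈ range m, w k / w (k + 1 + j) := by
    rw [prod_div_distrib, prod_const, card_range]
  have hprod_le_one : ∏ j ∈ range m, w k / w (k + 1 + j) ≤ 1 :=
    prod_le_one (fun j _ ↦ (hratio j).1) fun j _ ↦ (hratio j).2
  rw [Nat.add_sub_cancel, hprod, abs_of_nonneg (sub_nonneg.2 hprod_le_one)]
  calc 1 - ∏ j ∈ range m, w k / w (k + 1 + j)
      ≤ ∑ j ∈ range m, (1 - w k / w (k + 1 + j)) :=
        one_sub_prod_le_sum_one_sub _ _ (fun j _ ↦ (hratio j).1) fun j _ ↦ (hratio j).2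
    _ ≤ ∑ j ∈ range m, ∑ i ∈ range (j + 1), h₃ (k + 1 + i) := sum_le_sum fun j _ ↦ by
        have := one_sub_div_le_sum_of_one_sub_div_le hpos hmono hstep k (j + 1)
        rwa [Nat.cast_succ, add_comm (j : ℤ), ← add_assoc] at this
    _ = ∑ j ∈ range (m + 1), (j : ℝ) * h₃ (k + 1 + ↑(m - j)) :=
        sum_range_sum_range_succ_eq_sum_mul_sub _ m
    _ = ∑ j ∈ range (m + 1), (j : ℝ) * h₃ (k + ↑(m + 1) - j) :=
        sum_congr rfl fun j hj ↦ by
          rw [Nat.cast_sub (Nat.lt_succ_iff.1 (mem_range.1 hj))]; push_cast; ring_nf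

theorem weight_ratio_product_bound (w : ℤ → ℝ) (hpos : ∀ k, 0 < w k) (hmono : Monotone w)
    (h₃ : ℤ → ℝ) (h₃nonneg : ∀ k, 0 ≤ h₃ k)
    (hstep : ∀ k, 1 - w (k - 1) / w k ≤ h₃ k) :
    ∀ (k : ℤ) (n : ℕ), 1 ≤ n →
      |1 - w k ^ (n - 1) / ∏ j ∈ Finset.range (n - 1), w (k + 1 + j)| ≤
        ∑ j ∈ Finset.range n, (j : ℝ) * h₃ (k + n - j) :=
  weight_ratio_product_bound_general w hpos hmono h₃ hstep
end
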